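/- arXiv:2206.09569 — 4 statements merged into one kernel-verified Lean document; each statement's English description precedes it below -/
import Mathlib

section
/- For σ > 0, integer λ ≥ 2, and n a positive integer, the shuffle Gaussian Rényi divergence expression (1/(λ−1)) · log((e^{−λ/(2σ²)}/n^λ) · ∑_{k₁+...+kₙ=λ, kᵢ≥0} (λ choose k₁,...,kₙ) · e^{(∑ᵢ kᵢ²)/(2σ²)}) is at most λ/(2σ²). -/
/-- The multinomially-weighted exponential sum appearing in the shuffle Gaussian RDP. -/
noncomputable def shuffleSum (σ : ℝ) (l n : ℕ) : ℝ :=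
  ∑ k ∈ Finset.filter (fun k => ∑ i, k i = l)
      (Fintype.piFinset fun _ : Fin n => Finset.range (l + 1)),
    (Nat.multinomial Finset.univ k : ℝ) * Real.exp ((∑ i, (k i : ℝ) ^ 2) / (2 * σ ^ 2))

/-- The shuffle Gaussian moment quantity
`F(n) = (e^{-λ/(2σ²)}/n^λ) ⬝ ∑ multinomial ⬝ e^{∑kᵢ²/(2σ²)}`. -/
noncomputable def shuffleF (σ : ℝ) (l n : ℕ) : ℝ :=
  Real.exp (-(l : ℝ) / (2 * σ ^ 2)) / (n : ℝ) ^ l * shuffleSum σ l n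

lemma shuffle_index_eq (l n : ℕ) :
    Finset.filter (fun k => ∑ i, k i = l)
      (Fintype.piFinset fun _ : Fin n => Finset.range (l + 1)) =
    Finset.piAntidiag Finset.univ l := by
  ext k
  simp only [Finset.mem_filter, Fintype.mem_piFinset, Finset.mem_range, Nat.lt_succ_iff,
    Finset.mem_piAntidiag, Finset.mem_univ, implies_true, and_true]
  constructor
  · rintro ⟨-, h⟩; exact h
  · rintro h
    refine ⟨fun i => ?_, h⟩
    rw [← h]
    exact Finset.single_le_sum (fun _ _ => Nat.zero_le _) (Finset.mem_univ i)

lemma sum_multinomial (l n : ℕ) :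
    ∑ k ∈ Finset.piAntidiag (Finset.univ : Finset (Fin n)) l,
      (Nat.multinomial Finset.univ k : ℝ) = (n : ℝ) ^ l := by
  have := Finset.sum_pow_eq_sum_piAntidiag (Finset.univ : Finset (Fin n))
    (fun _ => (1 : ℝ)) l
  simpa using this.symm

theorem shuffle_gaussian_rdp_le (σ : ℝ) (hσ : 0 < σ) (l : ℕ) (hl : 2 ≤ l)
    (n : ℕ) (hn : 0 < n) :
    (1 / ((l : ℝ) - 1)) * Real.log (shuffleF σ l n) ≤ (l : ℝ) / (2 * σ ^ 2) := by
  have hσ2 : (0 : ℝ) < 2 * σ ^ 2 := by positivity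
  have hl1 : (1 : ℝ) < (l : ℝ) := by exact_mod_cast Nat.lt_of_lt_of_le one_lt_two hl
  have hnpos : (0 : ℝ) < (n : ℝ) ^ l := by positivity
  -- sum positivity
  have hmem : (fun _ : Fin n => 0) ∈ Finset.piAntidiag (Finset.univ : Finset (Fin n)) l ∨ True :=
    Or.inr trivial
  have hne : (Finset.piAntidiag (Finset.univ : Finset (Fin n)) l).Nonempty := by
    classical
    refine ⟨fun i => if i = ⟨0, hn⟩ then l else 0, ?_⟩
    simp only [Finset.mem_piAntidiag, Finset.mem_univ, implies_true, and_true]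
    simp
  have hSpos : 0 < shuffleSum σ l n := by
    rw [shuffleSum, shuffle_index_eq]
    refine Finset.sum_pos (fun k _ => ?_) hne
    have : (0:ℝ) < (Nat.multinomial Finset.univ k : ℝ) := by
      exact_mod_cast Nat.multinomial_pos _ _
    positivity
  -- upper bound on each exponential
  have hSle : shuffleSum σ l n ≤ Real.exp (((l:ℝ)^2) / (2 * σ ^ 2)) * (n : ℝ) ^ l := by
    rw [shuffleSum, shuffle_index_eq, ← sum_multinomial l n, Finset.mul_sum]
    refine Finset.sum_le_sum fun k hk => ?_
    rw [Finset.mem_piAntidiag] at hk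
    have hb : (∑ i, (k i : ℝ) ^ 2) ≤ (l : ℝ) ^ 2 := by
      calc (∑ i, (k i : ℝ) ^ 2) ≤ (∑ i, (k i : ℝ)) ^ 2 :=
            Finset.sum_sq_le_sq_sum_of_nonneg (fun i _ => Nat.cast_nonneg _)
        _ = (l : ℝ) ^ 2 := by rw [← Nat.cast_sum, hk.1]
    have : Real.exp ((∑ i, (k i : ℝ) ^ 2) / (2 * σ ^ 2)) ≤
        Real.exp (((l:ℝ)^2) / (2 * σ ^ 2)) :=
      Real.exp_le_exp.2 (div_le_div_of_nonneg_right hb hσ2.le |>.trans_eq rfl)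
    rw [mul_comm ((Nat.multinomial Finset.univ k : ℝ)) _]
    exact mul_le_mul_of_nonneg_right this (Nat.cast_nonneg _)
  have hFpos : 0 < shuffleF σ l n := by
    rw [shuffleF]; positivity
  have hFle : shuffleF σ l n ≤ Real.exp ((l : ℝ) * ((l:ℝ) - 1) / (2 * σ ^ 2)) := by
    rw [shuffleF]
    have h1 : Real.exp (-(l : ℝ) / (2 * σ ^ 2)) / (n : ℝ) ^ l * shuffleSum σ l n ≤
        Real.exp (-(l : ℝ) / (2 * σ ^ 2)) / (n : ℝ) ^ l *
          (Real.exp (((l:ℝ)^2) / (2 * σ ^ 2)) * (n : ℝ) ^ l) := by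
      apply mul_le_mul_of_nonneg_left hSle
      positivity
    refine h1.trans_eq ?_
    have h2 : Real.exp (-(l : ℝ) / (2 * σ ^ 2)) / (n : ℝ) ^ l *
        (Real.exp (((l:ℝ)^2) / (2 * σ ^ 2)) * (n : ℝ) ^ l) =
        Real.exp (-(l : ℝ) / (2 * σ ^ 2)) * Real.exp (((l:ℝ)^2) / (2 * σ ^ 2)) := by
      field_simp
    rw [h2, ← Real.exp_add]
    congr 1
    field_simp
    ring

  have hlog : Real.log (shuffleF σ l n) ≤ (l : ℝ) * ((l:ℝ) - 1) / (2 * σ ^ 2) := by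
    calc Real.log (shuffleF σ l n) ≤ Real.log (Real.exp ((l : ℝ) * ((l:ℝ) - 1) / (2 * σ ^ 2))) :=
          Real.log_le_log hFpos hFle
      _ = _ := Real.log_exp _
  have hl1' : (0 : ℝ) < (l : ℝ) - 1 := by linarith
  calc (1 / ((l : ℝ) - 1)) * Real.log (shuffleF σ l n)
      ≤ (1 / ((l : ℝ) - 1)) * ((l : ℝ) * ((l:ℝ) - 1) / (2 * σ ^ 2)) := by
        exact mul_le_mul_of_nonneg_left hlog (by positivity)
    _ = (l : ℝ) / (2 * σ ^ 2) := by field_simp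
end

section
/- Let σ > 0 and let P = N(0, σ²Iₙ) and Q = (1/n)∑ⱼ₌₁ⁿ N(eⱼ, σ²Iₙ) be distributions on ℝⁿ, where eⱼ is the j-th standard basis vector. Then for a positive integer λ ≥ 2, E_{x∼P}[(dQ/dP(x))^λ] = (e^{−λ/(2σ²)}/n^λ) · ∑_{k₁+...+kₙ=λ, kᵢ≥0} (λ choose k₁,...,kₙ) · e^{(∑ᵢ kᵢ²)/(2σ²)}. -/
open MeasureTheory

lemma integrable_exp_lin_quad {b : ℝ} (hb : 0 < b) (t : ℝ) :
    Integrable (fun x : ℝ => Real.exp (t * x - b * x ^ 2)) := by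
  have h := (integrable_cexp_quadratic (b := (b : ℂ)) (by simpa using hb) (t : ℂ) 0).norm
  convert h using 2 with x
  rw [Complex.norm_exp]
  congr 1
  simp [← Complex.ofReal_pow]
  ring

lemma integral_exp_lin_quad {b : ℝ} (hb : 0 < b) (t : ℝ) :
    ∫ x : ℝ, Real.exp (t * x - b * x ^ 2)
      = Real.sqrt (Real.pi / b) * Real.exp (t ^ 2 / (4 * b)) := by
  have h := integral_cexp_quadratic (b := (-b : ℂ)) (by simpa using hb) (t : ℂ) 0
  have hpt : ∀ x : ℝ, Complex.exp (-(b:ℂ) * x ^ 2 + t * x + 0)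
      = ((Real.exp (t * x - b * x ^ 2) : ℝ) : ℂ) := by
    intro x; rw [Complex.ofReal_exp]; push_cast; ring_nf
  have hl : (∫ x : ℝ, Complex.exp (-(b:ℂ) * x ^ 2 + t * x + 0))
      = ((∫ x : ℝ, Real.exp (t * x - b * x ^ 2) : ℝ) : ℂ) := by
    simp_rw [hpt]; exact integral_ofReal
  have hr : ((Real.pi : ℂ) / -(-(b:ℂ))) ^ (1 / 2 : ℂ) * Complex.exp (0 - (t:ℂ)^2 / (4 * -(b:ℂ)))
      = ((Real.sqrt (Real.pi / b) * Real.exp (t ^ 2 / (4 * b)) : ℝ) : ℂ) := by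
    rw [neg_neg]
    have h1 : ((Real.pi : ℂ) / (b:ℂ)) ^ (1 / 2 : ℂ) = ((Real.sqrt (Real.pi / b) : ℝ) : ℂ) := by
      rw [Real.sqrt_eq_rpow,
        show ((Real.pi : ℂ) / (b:ℂ)) = ((Real.pi / b : ℝ) : ℂ) by push_cast; ring,
        show ((1:ℂ)/2) = ((1/2 : ℝ) : ℂ) by norm_num,
        ← Complex.ofReal_cpow (by positivity)]
    have h2 : Complex.exp (0 - (t:ℂ)^2 / (4 * -(b:ℂ))) = ((Real.exp (t ^ 2 / (4 * b)) : ℝ) : ℂ) := by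
      rw [Complex.ofReal_exp]
      congr 1
      push_cast
      field_simp
      ring
    rw [h1, h2, ← Complex.ofReal_mul]
  rw [hl, hr] at h
  exact_mod_cast h



set_option maxHeartbeats 1000000 in
/-- The λ-th moment of the likelihood ratio dQ/dP under P, where
`P = N(0, σ²Iₙ)` and `Q = (1/n) ∑ⱼ N(eⱼ, σ²Iₙ)` on `ℝⁿ`, equals the
multinomial exponential sum of the shuffle Gaussian. -/
theorem shuffle_gaussian_moment (n : ℕ) (hn : 0 < n) (σ : ℝ) (hσ : 0 < σ)
    (l : ℕ) (hl : 2 ≤ l) :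
    (∫ x : Fin n → ℝ,
        ((((1 : ℝ) / n) * ∑ j : Fin n,
            Real.exp (-(∑ i, (x i - if i = j then 1 else 0) ^ 2) / (2 * σ ^ 2))
              / Real.exp (-(∑ i, (x i) ^ 2) / (2 * σ ^ 2))) ^ l)
          * (Real.exp (-(∑ i, (x i) ^ 2) / (2 * σ ^ 2))
              / (2 * Real.pi * σ ^ 2) ^ ((n : ℝ) / 2)))
      = shuffleF σ l n := by
  have hσ2 : (0:ℝ) < 2 * σ ^ 2 := by positivity
  have hb : (0:ℝ) < (2 * σ ^ 2)⁻¹ := by positivity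
  have hπσ : (0:ℝ) < 2 * Real.pi * σ ^ 2 := by
    have := Real.pi_pos; positivity
  have hR0 : (2 * Real.pi * σ ^ 2) ^ ((n : ℝ) / 2) ≠ 0 := by positivity
  -- the index set
  have hset : Finset.filter (fun k => ∑ i, k i = l)
      (Fintype.piFinset fun _ : Fin n => Finset.range (l + 1))
      = Finset.piAntidiag Finset.univ l := by
    ext k
    simp only [Finset.mem_filter, Fintype.mem_piFinset, Finset.mem_range, Finset.mem_piAntidiag]
    constructor
    · rintro ⟨h1, h2⟩; exact ⟨h2, fun i _ => Finset.mem_univ i⟩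
    · rintro ⟨h1, -⟩
      refine ⟨fun i => Nat.lt_succ_of_le ?_, h1⟩
      rw [← h1]; exact Finset.single_le_sum (fun _ _ => Nat.zero_le _) (Finset.mem_univ i)
  -- pointwise identity for the integrand
  have hpt : ∀ x : Fin n → ℝ,
      ((((1 : ℝ) / n) * ∑ j : Fin n,
          Real.exp (-(∑ i, (x i - if i = j then 1 else 0) ^ 2) / (2 * σ ^ 2))
            / Real.exp (-(∑ i, (x i) ^ 2) / (2 * σ ^ 2))) ^ l)
        * (Real.exp (-(∑ i, (x i) ^ 2) / (2 * σ ^ 2))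
            / (2 * Real.pi * σ ^ 2) ^ ((n : ℝ) / 2))
      = ∑ k ∈ Finset.piAntidiag Finset.univ l,
          ((Nat.multinomial Finset.univ k : ℝ) *
            (Real.exp (-(l : ℝ) / (2 * σ ^ 2)) / (n : ℝ) ^ l
              / (2 * Real.pi * σ ^ 2) ^ ((n : ℝ) / 2))) *
          ∏ i, Real.exp ((k i : ℝ) / σ ^ 2 * x i - (2 * σ ^ 2)⁻¹ * x i ^ 2) := by
    intro x
    have hsq : ∀ j : Fin n, ∑ i, (x i - if i = j then 1 else 0)^2
        = (∑ i, (x i)^2) + (1 - 2 * x j) := by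
      intro j
      have h1 : ∀ i : Fin n, (x i - if i = j then 1 else 0)^2
          = (x i)^2 + (if i = j then 1 - 2 * x j else 0) := by
        intro i
        by_cases h : i = j
        · subst h; simp; ring
        · simp [h]
      simp_rw [h1]
      rw [Finset.sum_add_distrib]
      simp
    have hterm : ∀ j : Fin n,
        Real.exp (-(∑ i, (x i - if i = j then 1 else 0)^2)/(2*σ^2))
          / Real.exp (-(∑ i, (x i)^2)/(2*σ^2))
        = Real.exp (-(1:ℝ)/(2*σ^2)) * Real.exp (x j / σ^2) := by
      intro j
      rw [← Real.exp_sub, ← Real.exp_add]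
      congr 1
      rw [hsq j]
      field_simp
      ring
    have hS : ((1:ℝ)/n) * ∑ j : Fin n,
        (Real.exp (-(∑ i, (x i - if i = j then 1 else 0)^2)/(2*σ^2))
          / Real.exp (-(∑ i, (x i)^2)/(2*σ^2)))
        = (1/n) * Real.exp (-(1:ℝ)/(2*σ^2)) * ∑ j : Fin n, Real.exp (x j / σ^2) := by
      rw [Finset.sum_congr rfl (fun j _ => hterm j), ← Finset.mul_sum, mul_assoc]
    rw [hS, mul_pow, mul_pow,
      Finset.sum_pow_eq_sum_piAntidiag Finset.univ (fun j => Real.exp (x j / σ^2)) l]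
    have hE : Real.exp (-(1:ℝ)/(2*σ^2)) ^ l = Real.exp (-(l:ℝ)/(2*σ^2)) := by
      rw [← Real.exp_nat_mul]
      congr 1
      ring
    rw [hE, Finset.mul_sum, Finset.sum_mul]
    refine Finset.sum_congr rfl fun k hk => ?_
    have hprod : (∏ j, Real.exp (x j / σ^2) ^ (k j)) * Real.exp (-(∑ i, (x i)^2)/(2*σ^2))
        = ∏ i, Real.exp ((k i : ℝ)/σ^2 * x i - (2*σ^2)⁻¹ * x i^2) := by
      rw [show (-(∑ i, (x i)^2)/(2*σ^2)) = ∑ i, (-(x i)^2/(2*σ^2)) by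
        rw [← Finset.sum_div, ← Finset.sum_neg_distrib],
        Real.exp_sum, ← Finset.prod_mul_distrib]
      refine Finset.prod_congr rfl fun i _ => ?_
      rw [← Real.exp_nat_mul, ← Real.exp_add]
      congr 1
      field_simp
      ring
    calc ((1:ℝ)/n)^l * Real.exp (-(l:ℝ)/(2*σ^2)) *
          ((Nat.multinomial Finset.univ k : ℝ) * ∏ j, Real.exp (x j / σ^2) ^ (k j)) *
          (Real.exp (-(∑ i, (x i)^2)/(2*σ^2)) / (2 * Real.pi * σ ^ 2) ^ ((n : ℝ) / 2))
        = ((Nat.multinomial Finset.univ k : ℝ) *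
            (Real.exp (-(l : ℝ) / (2 * σ ^ 2)) / (n : ℝ) ^ l
              / (2 * Real.pi * σ ^ 2) ^ ((n : ℝ) / 2))) *
          ((∏ j, Real.exp (x j / σ^2) ^ (k j)) * Real.exp (-(∑ i, (x i)^2)/(2*σ^2))) := by
          ring
      _ = _ := by rw [hprod]
  rw [integral_congr_ae (Filter.EventuallyEq.of_eq (funext hpt))]
  rw [MeasureTheory.integral_finset_sum]
  · have hSn : Real.sqrt (Real.pi/(2*σ^2)⁻¹) ^ n = (2*Real.pi*σ^2) ^ ((n:ℝ)/2) := by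
      rw [show Real.pi/(2*σ^2)⁻¹ = 2*Real.pi*σ^2 by field_simp]
      rw [Real.sqrt_eq_rpow, ← Real.rpow_natCast ((2*Real.pi*σ^2) ^ ((1:ℝ)/2)) n,
        ← Real.rpow_mul hπσ.le]
      congr 1
      ring
    trans (∑ k ∈ Finset.piAntidiag (Finset.univ : Finset (Fin n)) l,
        (Nat.multinomial Finset.univ k : ℝ) * (Real.exp (-(l:ℝ)/(2*σ^2))/(n:ℝ)^l)
          * Real.exp ((∑ i, (k i:ℝ)^2)/(2*σ^2)))
    · refine Finset.sum_congr rfl fun k hk => ?_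
      have hexp : ∀ i : Fin n, ((k i:ℝ)/σ^2)^2/(4*(2*σ^2)⁻¹) = (k i:ℝ)^2/(2*σ^2) := by
        intro i; field_simp; ring
      rw [MeasureTheory.integral_const_mul _ _,
        MeasureTheory.integral_fintype_prod_volume_eq_prod (ι := Fin n)
          (fun i y => Real.exp ((k i : ℝ)/σ^2 * y - (2*σ^2)⁻¹ * y^2)),
        Finset.prod_congr rfl (fun i _ => integral_exp_lin_quad hb ((k i:ℝ)/σ^2))]
      simp_rw [hexp]
      rw [Finset.prod_mul_distrib, Finset.prod_const, Finset.card_univ, Fintype.card_fin,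
        hSn, ← Real.exp_sum, ← Finset.sum_div]
      field_simp
    · rw [shuffleF, shuffleSum, hset, Finset.mul_sum]
      exact Finset.sum_congr rfl fun k _ => by ring
  · intro k _
    exact (Integrable.fintype_prod (fun i =>
      integrable_exp_lin_quad hb ((k i : ℝ)/σ^2))).const_mul _
end

section
/- For σ > 0 and a positive integer λ, ∫_{ℝⁿ} (∑ᵢ₌₁ⁿ exp((2xᵢ−1)/(2σ²)))^λ · exp(−∑ᵢ xᵢ²/(2σ²)) / (2πσ²)^{n/2} dx = ∑_{k₁+...+kₙ=λ, kᵢ≥0} (λ choose k₁,...,kₙ) · ∏ᵢ₌₁ⁿ exp((kᵢ²−kᵢ)/(2σ²)). -/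
open Real MeasureTheory Finset in
lemma gauss1d_aux (σ : ℝ) (hσ : 0 < σ) (k : ℕ) :
    ∫ x : ℝ, Real.exp ((2 * x - 1) / (2 * σ ^ 2)) ^ k * Real.exp (-x ^ 2 / (2 * σ ^ 2))
      = Real.sqrt (2 * Real.pi * σ ^ 2)
        * Real.exp (((k : ℝ) ^ 2 - (k : ℝ)) / (2 * σ ^ 2)) := by
  have hs : (0:ℝ) < 2 * σ ^ 2 := by positivity
  have hb : (0:ℝ) < (2 * σ ^ 2)⁻¹ := by positivity
  have key : ∀ x : ℝ, Real.exp ((2 * x - 1) / (2 * σ ^ 2)) ^ k * Real.exp (-x ^ 2 / (2 * σ ^ 2))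
      = Real.exp (((k : ℝ) ^ 2 - (k : ℝ)) / (2 * σ ^ 2))
        * Real.exp (-(2 * σ ^ 2)⁻¹ * (x - (k : ℝ)) ^ 2) := by
    intro x
    rw [← Real.exp_nat_mul, ← Real.exp_add, ← Real.exp_add]
    congr 1
    field_simp
    ring
  simp_rw [key]
  rw [integral_const_mul, integral_sub_right_eq_self (μ := volume)
      (fun x => Real.exp (-(2 * σ ^ 2)⁻¹ * x ^ 2)) (k:ℝ),
    integral_gaussian]
  rw [mul_comm]
  congr 2
  field_simp

open Real MeasureTheory Finset in
lemma int1d_aux (σ : ℝ) (hσ : 0 < σ) (k : ℕ) :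
    Integrable (fun x : ℝ => Real.exp ((2 * x - 1) / (2 * σ ^ 2)) ^ k
      * Real.exp (-x ^ 2 / (2 * σ ^ 2))) := by
  have hb : (0:ℝ) < (2 * σ ^ 2)⁻¹ := by positivity
  have key : ∀ x : ℝ, Real.exp ((2 * x - 1) / (2 * σ ^ 2)) ^ k * Real.exp (-x ^ 2 / (2 * σ ^ 2))
      = Real.exp (((k : ℝ) ^ 2 - (k : ℝ)) / (2 * σ ^ 2))
        * Real.exp (-(2 * σ ^ 2)⁻¹ * (x - (k : ℝ)) ^ 2) := by
    intro x
    rw [← Real.exp_nat_mul, ← Real.exp_add, ← Real.exp_add]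
    congr 1
    field_simp
    ring
  simp_rw [key]
  exact ((integrable_exp_neg_mul_sq hb).comp_sub_right _).const_mul _

open Real MeasureTheory Finset in
lemma setEq_aux (n l : ℕ) :
    Finset.piAntidiag (Finset.univ : Finset (Fin n)) l
      = Finset.filter (fun k => ∑ i, k i = l)
          (Fintype.piFinset fun _ : Fin n => Finset.range (l + 1)) := by
  ext k
  simp only [Finset.mem_piAntidiag, Finset.mem_filter, Fintype.mem_piFinset,
    Finset.mem_range, Nat.lt_succ_iff, Finset.mem_univ, implies_true, and_true]
  constructor
  · intro h
    refine ⟨fun i => ?_, h⟩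
    rw [← h]
    exact Finset.single_le_sum (fun _ _ => Nat.zero_le _) (Finset.mem_univ i)
  · exact fun h => h.2

open Real MeasureTheory Finset in
theorem integral_pow_sum_exp_eq_multinomial (n : ℕ) (σ : ℝ) (hσ : 0 < σ)
    (l : ℕ) (hl : 0 < l) :
    (∫ x : Fin n → ℝ,
        (∑ i, Real.exp ((2 * x i - 1) / (2 * σ ^ 2))) ^ l
          * Real.exp (-(∑ i, (x i) ^ 2) / (2 * σ ^ 2))
          / (2 * Real.pi * σ ^ 2) ^ ((n : ℝ) / 2))
      = ∑ k ∈ Finset.filter (fun k => ∑ i, k i = l)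
          (Fintype.piFinset fun _ : Fin n => Finset.range (l + 1)),
        (Nat.multinomial Finset.univ k : ℝ)
          * ∏ i, Real.exp (((k i : ℝ) ^ 2 - (k i : ℝ)) / (2 * σ ^ 2)) := by
  have hC : (0:ℝ) < 2 * Real.pi * σ ^ 2 := by positivity
  have hCn : ((2 * Real.pi * σ ^ 2) ^ ((n:ℝ)/2) : ℝ) ≠ 0 := (Real.rpow_pos_of_pos hC _).ne'
  have hsqrt : Real.sqrt (2 * Real.pi * σ ^ 2) ^ n = (2 * Real.pi * σ ^ 2) ^ ((n:ℝ)/2) := by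
    rw [Real.sqrt_eq_rpow, ← Real.rpow_natCast ((2*Real.pi*σ^2) ^ ((1:ℝ)/2)) n,
      ← Real.rpow_mul hC.le]
    congr 1
    ring
  have key : ∀ x : Fin n → ℝ,
      (∑ i, Real.exp ((2 * x i - 1) / (2 * σ ^ 2))) ^ l
          * Real.exp (-(∑ i, (x i) ^ 2) / (2 * σ ^ 2))
      = ∑ k ∈ Finset.piAntidiag (Finset.univ : Finset (Fin n)) l,
          (Nat.multinomial Finset.univ k : ℝ)
            * ∏ i, (Real.exp ((2 * x i - 1) / (2 * σ ^ 2)) ^ (k i)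
                * Real.exp (-(x i) ^ 2 / (2 * σ ^ 2))) := by
    intro x
    rw [Finset.sum_pow_eq_sum_piAntidiag, Finset.sum_mul]
    refine Finset.sum_congr rfl fun k hk => ?_
    rw [mul_assoc]
    congr 1
    rw [Finset.prod_mul_distrib]
    congr 1
    rw [← Real.exp_sum]
    congr 1
    rw [neg_div, ← Finset.sum_div]
    simp [neg_div, Finset.sum_div]
  rw [← setEq_aux, integral_div]
  simp_rw [key]
  rw [integral_finset_sum _ (fun k _ =>
    (Integrable.fintype_prod (𝕜 := ℝ) (fun i => int1d_aux σ hσ (k i))).const_mul _)]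
  have term : ∀ k ∈ Finset.piAntidiag (Finset.univ : Finset (Fin n)) l,
      (∫ x : Fin n → ℝ, (Nat.multinomial Finset.univ k : ℝ)
          * ∏ i, (Real.exp ((2 * x i - 1) / (2 * σ ^ 2)) ^ (k i)
              * Real.exp (-(x i) ^ 2 / (2 * σ ^ 2))))
        = (2 * Real.pi * σ ^ 2) ^ ((n:ℝ)/2)
          * ((Nat.multinomial Finset.univ k : ℝ)
            * ∏ i, Real.exp (((k i : ℝ) ^ 2 - (k i : ℝ)) / (2 * σ ^ 2))) := by
    intro k _
    rw [integral_const_mul, MeasureTheory.integral_fintype_prod_volume_eq_prod (ι := Fin n)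
      (fun i t => Real.exp ((2 * t - 1) / (2 * σ ^ 2)) ^ (k i)
        * Real.exp (-t ^ 2 / (2 * σ ^ 2)))]
    simp_rw [gauss1d_aux σ hσ]
    rw [Finset.prod_mul_distrib, Finset.prod_const, Finset.card_univ, Fintype.card_fin, hsqrt]
    ring
  rw [Finset.sum_congr rfl term, ← Finset.mul_sum, mul_comm, mul_div_assoc,
    div_self hCn, mul_one]
end

section
/- Let n be a positive integer, γ ∈ (0,1), λ > 1, and let ε_k for k ∈ {1,...,n} be a nonincreasing sequence of nonnegative reals. Then for any Δ ∈ (0,1) with m := ⌊(1−Δ)nγ⌋, ∑_{k=1}^{n} C(n,k) γᵏ(1−γ)^{n−k} e^{(λ−1)ε_k} ≤ e^{(λ−1)ε₁ − Δ²nγ/2} + e^{(λ−1)ε_{m+1}}. -/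
/-- Scalar inequality: for `0 < u ≤ 1`, `(u² - 1)/2 ≤ u * log u`. -/
lemma ulogu_ge (u : ℝ) (hu : 0 < u) (hu1 : u ≤ 1) :
    (u ^ 2 - 1) / 2 ≤ u * Real.log u := by
  have hx : (1 : ℝ) ≤ u⁻¹ := one_le_inv_iff₀.mpr ⟨hu, hu1⟩
  have hlx : 0 ≤ Real.log u⁻¹ := Real.log_nonneg hx
  have hs : Real.log u⁻¹ ≤ Real.sinh (Real.log u⁻¹) := Real.self_le_sinh_iff.mpr hlx
  rw [Real.sinh_log (by positivity)] at hs
  rw [Real.log_inv] at hs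
  have hinv : (u⁻¹)⁻¹ = u := inv_inv u
  rw [hinv] at hs
  -- hs : -log u ≤ (u⁻¹ - u)/2
  have h2 : u * (-Real.log u) ≤ u * ((u⁻¹ - u) / 2) := by
    exact mul_le_mul_of_nonneg_left hs hu.le
  have h3 : u * u⁻¹ = 1 := mul_inv_cancel₀ hu.ne'
  nlinarith [h2, h3]

/-- Chernoff bound for the lower tail of a binomial. -/
lemma chernoff_tail (n : ℕ) (γ Δ : ℝ) (hγ : γ ∈ Set.Ioo (0 : ℝ) 1)
    (hΔ : Δ ∈ Set.Ioo (0 : ℝ) 1) (m : ℕ) (hma : (m : ℝ) ≤ (1 - Δ) * ((n : ℝ) * γ)) :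
    ∑ k ∈ (Finset.range (n + 1)).filter (· ≤ m),
        (Nat.choose n k : ℝ) * γ ^ k * (1 - γ) ^ (n - k)
      ≤ Real.exp (-(Δ ^ 2 * ((n : ℝ) * γ) / 2)) := by
  obtain ⟨hγ0, hγ1⟩ := hγ
  obtain ⟨hΔ0, hΔ1⟩ := hΔ
  set t : ℝ := 1 - Δ with ht
  have ht0 : 0 < t := by simp [ht]; linarith
  have ht1 : t < 1 := by simp [ht]; linarith
  set a : ℝ := (1 - Δ) * ((n : ℝ) * γ) with ha
  have hnγ : 0 ≤ (n : ℝ) * γ := by positivity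
  have ha0 : 0 ≤ a := by positivity
  have h1γ : (0:ℝ) ≤ 1 - γ := by linarith
  have hnn : ∀ k, 0 ≤ (Nat.choose n k : ℝ) * γ ^ k * (1 - γ) ^ (n - k) := fun k =>
    mul_nonneg (mul_nonneg (Nat.cast_nonneg _) (pow_nonneg hγ0.le k)) (pow_nonneg h1γ _)
  -- step 1: termwise multiply by t^k * t^(-a) ≥ 1
  have step1 : ∑ k ∈ (Finset.range (n + 1)).filter (· ≤ m),
      (Nat.choose n k : ℝ) * γ ^ k * (1 - γ) ^ (n - k)
      ≤ (∑ k ∈ (Finset.range (n + 1)).filter (· ≤ m),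
        (Nat.choose n k : ℝ) * γ ^ k * (1 - γ) ^ (n - k) * t ^ k) * t ^ (-a) := by
    rw [Finset.sum_mul]
    apply Finset.sum_le_sum
    intro k hk
    simp only [Finset.mem_filter, Finset.mem_range] at hk
    have hka : (k : ℝ) ≤ a := le_trans (by exact_mod_cast hk.2) hma
    have h1 : (1 : ℝ) ≤ t ^ k * t ^ (-a) := by
      have : t ^ k * t ^ (-a) = t ^ ((k : ℝ) - a) := by
        rw [← Real.rpow_natCast t k, ← Real.rpow_add ht0]
        ring_nf
      rw [this]
      exact Real.one_le_rpow_of_pos_of_le_one_of_nonpos ht0 ht1.le (by linarith)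
    calc (Nat.choose n k : ℝ) * γ ^ k * (1 - γ) ^ (n - k)
        = (Nat.choose n k : ℝ) * γ ^ k * (1 - γ) ^ (n - k) * 1 := by ring
      _ ≤ (Nat.choose n k : ℝ) * γ ^ k * (1 - γ) ^ (n - k) * (t ^ k * t ^ (-a)) :=
          mul_le_mul_of_nonneg_left h1 (hnn k)
      _ = (Nat.choose n k : ℝ) * γ ^ k * (1 - γ) ^ (n - k) * t ^ k * t ^ (-a) := by ring
  -- step 2: the weighted sum is at most (γt + (1-γ))^n
  have step2 : ∑ k ∈ (Finset.range (n + 1)).filter (· ≤ m),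
      (Nat.choose n k : ℝ) * γ ^ k * (1 - γ) ^ (n - k) * t ^ k
      ≤ (γ * t + (1 - γ)) ^ n := by
    have hsub : (Finset.range (n + 1)).filter (· ≤ m) ⊆ Finset.range (n + 1) :=
      Finset.filter_subset _ _
    have h1 : ∑ k ∈ (Finset.range (n + 1)).filter (· ≤ m),
        (Nat.choose n k : ℝ) * γ ^ k * (1 - γ) ^ (n - k) * t ^ k
        ≤ ∑ k ∈ Finset.range (n + 1),
        (Nat.choose n k : ℝ) * γ ^ k * (1 - γ) ^ (n - k) * t ^ k := by
      apply Finset.sum_le_sum_of_subset_of_nonneg hsub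
      intro i _ _
      exact mul_nonneg (hnn i) (pow_nonneg ht0.le i)
    have h2 : (γ * t + (1 - γ)) ^ n
        = ∑ k ∈ Finset.range (n + 1),
          (Nat.choose n k : ℝ) * γ ^ k * (1 - γ) ^ (n - k) * t ^ k := by
      rw [add_pow]
      apply Finset.sum_congr rfl
      intro k _
      rw [mul_pow]
      ring
    rw [h2]; exact h1
  -- step 3: (γt + 1 - γ)^n ≤ exp(nγ(t-1))
  have step3 : (γ * t + (1 - γ)) ^ n ≤ Real.exp ((n : ℝ) * (γ * (t - 1))) := by
    have hb : 0 ≤ γ * t + (1 - γ) := by nlinarith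
    have h1 : γ * t + (1 - γ) ≤ Real.exp (γ * (t - 1)) := by
      have := Real.add_one_le_exp (γ * (t - 1))
      linarith
    calc (γ * t + (1 - γ)) ^ n ≤ (Real.exp (γ * (t - 1))) ^ n :=
          pow_le_pow_left₀ hb h1 n
      _ = Real.exp ((n : ℝ) * (γ * (t - 1))) := by
          rw [← Real.exp_nat_mul]
  -- combine
  have hta : t ^ (-a) = Real.exp (-a * Real.log t) := by
    rw [Real.rpow_def_of_pos ht0]; ring_nf
  have hcomb : (∑ k ∈ (Finset.range (n + 1)).filter (· ≤ m),
      (Nat.choose n k : ℝ) * γ ^ k * (1 - γ) ^ (n - k) * t ^ k) * t ^ (-a)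
      ≤ Real.exp ((n : ℝ) * (γ * (t - 1)) + (-a * Real.log t)) := by
    rw [Real.exp_add, hta]
    exact mul_le_mul_of_nonneg_right (le_trans step2 step3) (Real.exp_nonneg _)
  refine le_trans step1 (le_trans hcomb ?_)
  apply Real.exp_le_exp.mpr
  -- exponent inequality
  have key : (t ^ 2 - 1) / 2 ≤ t * Real.log t := ulogu_ge t ht0 ht1.le
  have ht2 : t - 1 = -Δ := by simp [ht]
  have haeq : a = t * ((n : ℝ) * γ) := by simp [ha, ht]
  rw [haeq, ht2]
  have hΔt : Δ ^ 2 / 2 - Δ = (t ^ 2 - 1) / 2 := by simp [ht]; ring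
  nlinarith [mul_le_mul_of_nonneg_left key hnγ]

theorem binomial_split_chernoff_bound (n : ℕ) (hn : 0 < n) (γ lam Δ : ℝ)
    (hγ : γ ∈ Set.Ioo (0 : ℝ) 1) (hlam : 1 < lam) (hΔ : Δ ∈ Set.Ioo (0 : ℝ) 1)
    (ε : ℕ → ℝ) (hε0 : ∀ k, 1 ≤ k → k ≤ n → 0 ≤ ε k)
    (hmono : ∀ j k, 1 ≤ j → j ≤ k → k ≤ n → ε k ≤ ε j)
    (m : ℕ) (hm : m = ⌊(1 - Δ) * ((n : ℝ) * γ)⌋₊) :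
    ∑ k ∈ Finset.Icc 1 n,
        (Nat.choose n k : ℝ) * γ ^ k * (1 - γ) ^ (n - k) * Real.exp ((lam - 1) * ε k)
      ≤ Real.exp ((lam - 1) * ε 1 - Δ ^ 2 * ((n : ℝ) * γ) / 2)
          + Real.exp ((lam - 1) * ε (m + 1)) := by
  obtain ⟨hγ0, hγ1⟩ := hγ
  obtain ⟨hΔ0, hΔ1⟩ := hΔ
  have hma : (m : ℝ) ≤ (1 - Δ) * ((n : ℝ) * γ) := by
    rw [hm]; exact Nat.floor_le (mul_nonneg (by linarith) (by positivity))
  have hlam0 : 0 ≤ lam - 1 := by linarith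
  have h1γ : (0:ℝ) ≤ 1 - γ := by linarith
  have hnn : ∀ k, 0 ≤ (Nat.choose n k : ℝ) * γ ^ k * (1 - γ) ^ (n - k) := fun k =>
    mul_nonneg (mul_nonneg (Nat.cast_nonneg _) (pow_nonneg hγ0.le k)) (pow_nonneg h1γ _)
  rw [← Finset.sum_filter_add_sum_filter_not (Finset.Icc 1 n) (· ≤ m)]
  have partA : ∑ k ∈ (Finset.Icc 1 n).filter (· ≤ m),
      (Nat.choose n k : ℝ) * γ ^ k * (1 - γ) ^ (n - k) * Real.exp ((lam - 1) * ε k)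
      ≤ Real.exp ((lam - 1) * ε 1 - Δ ^ 2 * ((n : ℝ) * γ) / 2) := by
    have h1 : ∑ k ∈ (Finset.Icc 1 n).filter (· ≤ m),
        (Nat.choose n k : ℝ) * γ ^ k * (1 - γ) ^ (n - k) * Real.exp ((lam - 1) * ε k)
        ≤ (∑ k ∈ (Finset.Icc 1 n).filter (· ≤ m),
        (Nat.choose n k : ℝ) * γ ^ k * (1 - γ) ^ (n - k)) * Real.exp ((lam - 1) * ε 1) := by
      rw [Finset.sum_mul]
      apply Finset.sum_le_sum
      intro k hk
      simp only [Finset.mem_filter, Finset.mem_Icc] at hk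
      have hεk : ε k ≤ ε 1 := hmono 1 k le_rfl hk.1.1 hk.1.2
      have : Real.exp ((lam - 1) * ε k) ≤ Real.exp ((lam - 1) * ε 1) :=
        Real.exp_le_exp.mpr (mul_le_mul_of_nonneg_left hεk hlam0)
      exact mul_le_mul_of_nonneg_left this (hnn k)
    have h2 : ∑ k ∈ (Finset.Icc 1 n).filter (· ≤ m),
        (Nat.choose n k : ℝ) * γ ^ k * (1 - γ) ^ (n - k)
        ≤ Real.exp (-(Δ ^ 2 * ((n : ℝ) * γ) / 2)) := by
      refine le_trans (Finset.sum_le_sum_of_subset_of_nonneg ?_ ?_)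
        (chernoff_tail n γ Δ ⟨hγ0, hγ1⟩ ⟨hΔ0, hΔ1⟩ m hma)
      · intro k hk
        simp only [Finset.mem_filter, Finset.mem_Icc, Finset.mem_range] at hk ⊢
        exact ⟨Nat.lt_succ_of_le hk.1.2, hk.2⟩
      · intro i _ _; exact hnn i
    calc ∑ k ∈ (Finset.Icc 1 n).filter (· ≤ m),
        (Nat.choose n k : ℝ) * γ ^ k * (1 - γ) ^ (n - k) * Real.exp ((lam - 1) * ε k)
        ≤ (∑ k ∈ (Finset.Icc 1 n).filter (· ≤ m),
          (Nat.choose n k : ℝ) * γ ^ k * (1 - γ) ^ (n - k)) * Real.exp ((lam - 1) * ε 1) := h1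
      _ ≤ Real.exp (-(Δ ^ 2 * ((n : ℝ) * γ) / 2)) * Real.exp ((lam - 1) * ε 1) :=
          mul_le_mul_of_nonneg_right h2 (Real.exp_nonneg _)
      _ = Real.exp ((lam - 1) * ε 1 - Δ ^ 2 * ((n : ℝ) * γ) / 2) := by
          rw [← Real.exp_add]; ring_nf
  have partB : ∑ k ∈ (Finset.Icc 1 n).filter (fun k => ¬ k ≤ m),
      (Nat.choose n k : ℝ) * γ ^ k * (1 - γ) ^ (n - k) * Real.exp ((lam - 1) * ε k)
      ≤ Real.exp ((lam - 1) * ε (m + 1)) := by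
    have h1 : ∑ k ∈ (Finset.Icc 1 n).filter (fun k => ¬ k ≤ m),
        (Nat.choose n k : ℝ) * γ ^ k * (1 - γ) ^ (n - k) * Real.exp ((lam - 1) * ε k)
        ≤ (∑ k ∈ (Finset.Icc 1 n).filter (fun k => ¬ k ≤ m),
        (Nat.choose n k : ℝ) * γ ^ k * (1 - γ) ^ (n - k)) * Real.exp ((lam - 1) * ε (m + 1)) := by
      rw [Finset.sum_mul]
      apply Finset.sum_le_sum
      intro k hk
      simp only [Finset.mem_filter, Finset.mem_Icc, not_le] at hk
      have hεk : ε k ≤ ε (m + 1) :=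
        hmono (m + 1) k (Nat.succ_le_succ (Nat.zero_le m)) hk.2 hk.1.2
      have : Real.exp ((lam - 1) * ε k) ≤ Real.exp ((lam - 1) * ε (m + 1)) :=
        Real.exp_le_exp.mpr (mul_le_mul_of_nonneg_left hεk hlam0)
      exact mul_le_mul_of_nonneg_left this (hnn k)
    have h2 : ∑ k ∈ (Finset.Icc 1 n).filter (fun k => ¬ k ≤ m),
        (Nat.choose n k : ℝ) * γ ^ k * (1 - γ) ^ (n - k) ≤ 1 := by
      have htot : ∑ k ∈ Finset.range (n + 1),
          (Nat.choose n k : ℝ) * γ ^ k * (1 - γ) ^ (n - k) = 1 := by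
        calc ∑ k ∈ Finset.range (n + 1), (Nat.choose n k : ℝ) * γ ^ k * (1 - γ) ^ (n - k)
            = ∑ k ∈ Finset.range (n + 1), γ ^ k * (1 - γ) ^ (n - k) * (Nat.choose n k : ℝ) := by
              apply Finset.sum_congr rfl; intros; ring
          _ = (γ + (1 - γ)) ^ n := (add_pow γ (1 - γ) n).symm
          _ = 1 := by norm_num
      calc ∑ k ∈ (Finset.Icc 1 n).filter (fun k => ¬ k ≤ m),
          (Nat.choose n k : ℝ) * γ ^ k * (1 - γ) ^ (n - k)
          ≤ ∑ k ∈ Finset.range (n + 1), (Nat.choose n k : ℝ) * γ ^ k * (1 - γ) ^ (n - k) := by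
            apply Finset.sum_le_sum_of_subset_of_nonneg
            · intro k hk
              simp only [Finset.mem_filter, Finset.mem_Icc, Finset.mem_range] at hk ⊢
              exact Nat.lt_succ_of_le hk.1.2
            · intro i _ _; exact hnn i
        _ = 1 := htot
    calc ∑ k ∈ (Finset.Icc 1 n).filter (fun k => ¬ k ≤ m),
        (Nat.choose n k : ℝ) * γ ^ k * (1 - γ) ^ (n - k) * Real.exp ((lam - 1) * ε k)
        ≤ (∑ k ∈ (Finset.Icc 1 n).filter (fun k => ¬ k ≤ m),
          (Nat.choose n k : ℝ) * γ ^ k * (1 - γ) ^ (n - k)) * Real.exp ((lam - 1) * ε (m + 1)) := h1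
      _ ≤ 1 * Real.exp ((lam - 1) * ε (m + 1)) :=
          mul_le_mul_of_nonneg_right h2 (Real.exp_nonneg _)
      _ = Real.exp ((lam - 1) * ε (m + 1)) := one_mul _
  exact add_le_add partA partB
end
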